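/- arXiv:2003.12685 — 5 statements merged into one kernel-verified Lean document; each statement's English description precedes it below -/
import Mathlib

section
/- Let $h_1 \le \dots \le h_N$ be reals, $k < N$ a nonnegative integer, and suppose $z \in \{0,1\}^N$ with $\sum_{i=1}^N z_i \le k$ and $v \in \mathbb{R}$ satisfies $v \ge h_i$ whenever $z_i = 0$. Then for every index $i$ with $i \ge N-k$, the inequality $v + (h_i - h_{N-k}) z_i \ge h_i$ holds. -/
/-- Base strengthened (big-M-free) inequality: under the quantile hypotheses,
for every index `i ≥ N - k` (1-based), `v + (h i - h_{N-k}) z i ≥ h i`. -/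
theorem stmt1 (N k : ℕ) (hk : k < N) (h : Fin N → ℝ) (hmono : Monotone h)
    (z : Fin N → ℝ) (hz : ∀ i, z i = 0 ∨ z i = 1)
    (hsum : ∑ i, z i ≤ (k : ℝ))
    (v : ℝ) (hv : ∀ i, z i = 0 → h i ≤ v) :
    ∀ i : Fin N, N - k ≤ (i : ℕ) + 1 →
      h i ≤ v + (h i - h ⟨N - k - 1, by omega⟩) * z i := by
  set q : Fin N := ⟨N - k - 1, by omega⟩ with hq
  -- first show h q ≤ v
  have key : h q ≤ v := by
    by_contra hcon
    push_neg at hcon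
    -- then z j = 1 for all j ≥ q
    have hall : ∀ j : Fin N, q ≤ j → z j = 1 := by
      intro j hj
      rcases hz j with h0 | h1
      · exact absurd (le_trans (hmono hj) (hv j h0)) (not_le.mpr hcon)
      · exact h1
    have hcard : (Finset.Ici q).card = k + 1 := by
      rw [Fin.card_Ici]
      simp [hq]
      omega
    have hsum2 : ((k : ℝ) + 1) ≤ ∑ i, z i := by
      have h1 : ∑ j ∈ Finset.Ici q, z j = (k : ℝ) + 1 := by
        rw [Finset.sum_congr rfl (fun j hj => hall j (Finset.mem_Ici.mp hj))]
        simp [hcard]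
      calc ((k : ℝ) + 1) = ∑ j ∈ Finset.Ici q, z j := h1.symm
        _ ≤ ∑ i, z i := Finset.sum_le_sum_of_subset_of_nonneg (Finset.subset_univ _)
            (fun i _ _ => by rcases hz i with hh | hh <;> rw [hh] <;> norm_num)
    linarith
  intro i hi
  rcases hz i with h0 | h1
  · simpa [h0] using hv i h0
  · have hqi : q ≤ i := by
      simp only [Fin.le_def, hq]
      omega
    have := hmono hqi
    rw [h1]
    linarith
end

section
/- Let $h_1, \dots, h_N \ge 0$ be nonnegative reals sorted so that $h_1 \le h_2 \le \dots \le h_N$. Suppose $u \ge 0$, $r \in \mathbb{R}_+^N$, $z \in \{0,1\}^N$ satisfy $u + r_i \ge h_i(1 - z_i)$ for all $i \in [N]$. Then for any indices $N \ge j_1 > j_2 > \dots > j_m \ge 1$, setting $h_{j_{m+1}} := 0$, the path inequality $u + \sum_{i=1}^{m} r_{j_i} \ge \sum_{i=1}^{m} (h_{j_i} - h_{j_{i+1}})(1 - z_{j_i})$ holds. -/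
/-!
Write `g k = h (j k)` for `k < m` and `g k = 0` beyond, so that the coefficients are
`g k - g (k + 1) ≥ 0` and telescope. If `k` is the first index with `z (j k) = 0`, the terms
before `k` vanish and the remaining ones are at most `∑_{i ≥ k} (g i - g (i + 1)) = g k`, which
the constraint of row `j k` bounds by `u + r (j k)`. If there is no such `k`, the left side is `0`.
-/

open Finset

section Telescoping

variable {R : Type*} [Ring R] [PartialOrder R] [IsOrderedRing R]

theorem sum_range_sub_mul_le_sub {g w : ℕ → R} {m : ℕ} (hg : Antitone g)
    (hw : ∀ i < m, w i ≤ 1) :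
    ∑ i ∈ range m, (g i - g (i + 1)) * w i ≤ g 0 - g m :=
  calc ∑ i ∈ range m, (g i - g (i + 1)) * w i
      ≤ ∑ i ∈ range m, (g i - g (i + 1)) :=
        sum_le_sum fun i hi =>
          mul_le_of_le_one_right (sub_nonneg.2 (hg i.le_succ)) (hw i (mem_range.1 hi))
    _ = g 0 - g m := sum_range_sub' g m

theorem sum_range_sub_mul_le {g w : ℕ → R} {B : R} {m : ℕ} (hg : Antitone g) (hgm : 0 ≤ g m)
    (hw : ∀ i < m, w i ≤ 1) (hB : 0 ≤ B) (hgB : ∀ i < m, w i ≠ 0 → g i ≤ B) :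
    ∑ i ∈ range m, (g i - g (i + 1)) * w i ≤ B := by
  induction m generalizing g w with
  | zero => simpa using hB
  | succ m ih =>
    by_cases hw₀ : w 0 = 0
    · rw [sum_range_succ', hw₀, mul_zero, add_zero]
      exact ih (hg.comp_monotone fun _ _ => Nat.succ_le_succ) hgm
        (fun i hi => hw (i + 1) (by omega)) fun i hi => hgB (i + 1) (by omega)
    · calc ∑ i ∈ range (m + 1), (g i - g (i + 1)) * w i
          ≤ g 0 - g (m + 1) := sum_range_sub_mul_le_sub hg hw
        _ ≤ g 0 := sub_le_self _ hgm
        _ ≤ B := hgB 0 m.succ_pos hw₀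

end Telescoping

section ExtendByZero

variable {M : Type*} {m : ℕ}

def extendByZero [Zero M] (a : Fin m → M) (k : ℕ) : M :=
  if hk : k < m then a ⟨k, hk⟩ else 0

@[simp]
theorem extendByZero_val [Zero M] (a : Fin m → M) (i : Fin m) : extendByZero a i = a i := by
  simp [extendByZero]

theorem extendByZero_of_le [Zero M] (a : Fin m → M) {k : ℕ} (hk : m ≤ k) :
    extendByZero a k = 0 := by
  simp [extendByZero, hk]

theorem antitone_extendByZero [Zero M] [Preorder M] {a : Fin m → M} (ha : Antitone a)
    (ha₀ : ∀ i, 0 ≤ a i) : Antitone (extendByZero a) := by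
  intro k l hkl
  by_cases hl : l < m
  · simp only [extendByZero, hl, dif_pos (hkl.trans_lt hl)]
    exact ha (Fin.mk_le_mk.2 hkl)
  · rw [extendByZero_of_le a (not_lt.1 hl)]
    unfold extendByZero
    split_ifs
    exacts [ha₀ _, le_rfl]

end ExtendByZero

/-- Atamtürk's path inequalities are valid for the robust 0-1 set
`R⁺ = {(u,r,z) : u + r_i ≥ h_i (1 - z_i)}` with nonnegative sorted `h`. -/
theorem stmt3 (N m : ℕ) (h : Fin N → ℝ) (hnonneg : ∀ i, 0 ≤ h i) (hmono : Monotone h)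
    (u : ℝ) (hu : 0 ≤ u) (r : Fin N → ℝ) (hr : ∀ i, 0 ≤ r i)
    (z : Fin N → ℝ) (hz : ∀ i, z i = 0 ∨ z i = 1)
    (hfeas : ∀ i, h i * (1 - z i) ≤ u + r i)
    (j : Fin m → Fin N) (hdec : StrictAnti j) :
    ∑ i : Fin m,
        (h (j i) - (if hi : (i : ℕ) + 1 < m then h (j ⟨(i : ℕ) + 1, hi⟩) else 0))
          * (1 - z (j i))
      ≤ u + ∑ i : Fin m, r (j i) := by
  have hB : 0 ≤ u + ∑ i : Fin m, r (j i) := add_nonneg hu (sum_nonneg fun i _ => hr (j i))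
  have hw (i : Fin m) : 1 - z (j i) ≤ 1 := by rcases hz (j i) with hz' | hz' <;> simp [hz']
  have hgB (i : Fin m) (hi : 1 - z (j i) ≠ 0) : h (j i) ≤ u + ∑ i : Fin m, r (j i) := by
    have hz₀ : z (j i) = 0 := (hz (j i)).resolve_right fun hz₁ => hi (by simp [hz₁])
    calc h (j i) ≤ u + r (j i) := by simpa [hz₀] using hfeas (j i)
      _ ≤ u + ∑ i : Fin m, r (j i) := by
        gcongr; exact single_le_sum (fun i _ => hr (j i)) (mem_univ i)
  have key := sum_range_sub_mul_le (m := m) (w := extendByZero fun i => 1 - z (j i))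
    (antitone_extendByZero (hmono.comp_antitone hdec.antitone) fun i => hnonneg (j i))
    (extendByZero_of_le _ le_rfl).ge (fun i hi => by simpa [extendByZero, hi] using hw ⟨i, hi⟩)
    hB (fun i hi => by simpa [extendByZero, hi] using hgB ⟨i, hi⟩)
  rw [← Fin.sum_univ_eq_sum_range] at key
  simp only [extendByZero_val, Function.comp_apply] at key
  exact key
end

section
/- Let $d_1 \le d_2 \le \dots \le d_N$ be nonnegative reals, $\epsilon \in (0,1)$, $\theta \ge 0$, $k := \lfloor \epsilon N \rfloor$ with $k+1 \le N$. Suppose $\frac{\theta}{\epsilon} + \mathrm{CVaR}_{1-\epsilon}(-d) \le 0$, where $\mathrm{CVaR}_{1-\epsilon}(-d) = \min_{t'} \{ t' + \frac{1}{\epsilon N}\sum_i \max\{0, -d_i - t'\}\}$. Then setting $t := d_{k+1}$ and $r_i := \max\{0, t - d_i\}$ for each $i$, we have $t \ge 0$, $r \ge 0$, $d_i \ge t - r_i$ for all $i$, and $\epsilon t \ge \theta + \frac{1}{N}\sum_{i=1}^N r_i$. -/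
/-!
At `s = -d_{k+1}` the Rockafellar–Uryasev objective `s + (1/(εN)) ∑ max 0 (-d i - s)` attains its
minimum, because its one-sided slopes there are `1 - #{d i < d_{k+1}}/(εN) ≥ 1 - k/(εN) ≥ 0` and
`-1 + #{d i ≤ d_{k+1}}/(εN) ≥ -1 + (k+1)/(εN) > 0`. So the CVaR hypothesis holds in particular at
`s = -d_{k+1}`, and multiplying it by `ε` is exactly the last inequality of the conclusion.
-/

open Finset

section CVaR

variable {ι : Type*} [Fintype ι]

/-- The Rockafellar–Uryasev objective `s + c ∑ᵢ (xᵢ - s)⁺`; with `c = 1/(εN)` its infimum over `s` is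
`CVaR_{1-ε}` of the empirical distribution of the `xᵢ`. -/
noncomputable def cvarObjective (x : ι → ℝ) (c s : ℝ) : ℝ :=
  s + c * ∑ i, max 0 (x i - s)

theorem sum_max_sub_le_of_le (x : ι → ℝ) {q s : ℝ} (h : q ≤ s) :
    ∑ i, max 0 (x i - q) ≤ ∑ i, max 0 (x i - s) + (s - q) * #{i | q < x i} := by
  rw [natCast_card_filter, mul_sum, ← sum_add_distrib]
  refine sum_le_sum fun i _ => ?_
  split_ifs <;> simp only [max_def] <;> split_ifs <;> linarith

theorem sum_max_sub_add_le_of_le (x : ι → ℝ) {q s : ℝ} (h : s ≤ q) :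
    ∑ i, max 0 (x i - q) + (q - s) * #{i | q ≤ x i} ≤ ∑ i, max 0 (x i - s) := by
  rw [natCast_card_filter, mul_sum, ← sum_add_distrib]
  refine sum_le_sum fun i _ => ?_
  split_ifs <;> simp only [max_def] <;> split_ifs <;> linarith

theorem cvarObjective_le_of_card (x : ι → ℝ) {c q : ℝ} (hc : 0 ≤ c)
    (hlt : c * #{i | q < x i} ≤ 1) (hle : 1 ≤ c * #{i | q ≤ x i}) (s : ℝ) :
    cvarObjective x c q ≤ cvarObjective x c s := by
  unfold cvarObjective
  rcases le_total q s with hqs | hsq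
  · have := mul_le_mul_of_nonneg_left (sum_max_sub_le_of_le x hqs) hc
    nlinarith
  · have := mul_le_mul_of_nonneg_left (sum_max_sub_add_le_of_le x hsq) hc
    nlinarith

end CVaR

section OrderStatistic

variable {α : Type*} [LinearOrder α] {N : ℕ} {d : Fin N → α}

theorem card_filter_lt_apply_le (hd : Monotone d) (j : Fin N) : #{i | d i < d j} ≤ j := by
  calc #{i | d i < d j} ≤ #(Iio j) :=
        card_le_card fun i hi => mem_Iio.2 (hd.reflect_lt (mem_filter.1 hi).2)
    _ = j := Fin.card_Iio j

theorem le_card_filter_le_apply (hd : Monotone d) (j : Fin N) : (j : ℕ) + 1 ≤ #{i | d i ≤ d j} := by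
  calc (j : ℕ) + 1 = #(Iic j) := (Fin.card_Iic j).symm
    _ ≤ #{i | d i ≤ d j} := card_le_card fun i hi => mem_filter.2 ⟨mem_univ i, hd (mem_Iic.1 hi)⟩

end OrderStatistic

/-- t-bound lemma: if `θ/ε + CVaR_{1-ε}(-d) ≤ 0` for sorted nonnegative distances `d`,
then `t := d_{k+1}`, `r_i := max 0 (t - d_i)` give a feasible point of the
extended formulation: `t ≥ 0`, `r ≥ 0`, `d_i ≥ t - r_i`, and `ε t ≥ θ + (1/N) ∑ r_i`. -/
theorem stmt6 (N : ℕ) (d : Fin N → ℝ) (hd : ∀ i, 0 ≤ d i) (hmono : Monotone d)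
    (ε θ : ℝ) (hε : ε ∈ Set.Ioo (0:ℝ) 1)
    (k : ℕ) (hkdef : k = ⌊ε * N⌋₊) (hk : k + 1 ≤ N)
    (hcvar : θ / ε + ⨅ t' : ℝ, (t' + (1 / (ε * N)) * ∑ i, max 0 (-d i - t')) ≤ 0) :
    0 ≤ d ⟨k, by omega⟩ ∧
    (∀ i, 0 ≤ max 0 (d ⟨k, by omega⟩ - d i)) ∧
    (∀ i, d ⟨k, by omega⟩ - max 0 (d ⟨k, by omega⟩ - d i) ≤ d i) ∧
    θ + (1 / N) * ∑ i, max 0 (d ⟨k, by omega⟩ - d i) ≤ ε * d ⟨k, by omega⟩ := by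
  obtain ⟨hε0, -⟩ := hε
  set j : Fin N := ⟨k, by omega⟩
  have hN : (0 : ℝ) < N := by exact_mod_cast (by omega : 0 < N)
  have hεN : 0 < ε * N := mul_pos hε0 hN
  have hlt : 1 / (ε * N) * #{i | -d j < -d i} ≤ 1 := by
    rw [one_div_mul_eq_div, div_le_one hεN]
    simp only [neg_lt_neg_iff]
    calc (#{i | d i < d j} : ℝ) ≤ k := by exact_mod_cast card_filter_lt_apply_le hmono j
      _ ≤ ε * N := hkdef ▸ Nat.floor_le hεN.le
  have hle : 1 ≤ 1 / (ε * N) * #{i | -d j ≤ -d i} := by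
    rw [one_div_mul_eq_div, one_le_div hεN]
    simp only [neg_le_neg_iff]
    calc ε * N ≤ k + 1 := hkdef ▸ (Nat.lt_floor_add_one _).le
      _ ≤ #{i | d i ≤ d j} := by exact_mod_cast le_card_filter_le_apply hmono j
  have hmin : θ / ε + cvarObjective (fun i => -d i) (1 / (ε * N)) (-d j) ≤ 0 :=
    le_trans (add_le_add_right (le_ciInf (cvarObjective_le_of_card _ (by positivity) hlt hle)) _)
      hcvar
  refine ⟨hd j, fun i => le_max_left _ _, fun i => by linarith [le_max_right 0 (d j - d i)], ?_⟩
  simp only [cvarObjective, sub_neg_eq_add, neg_add_eq_sub] at hmin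
  field_simp at hmin ⊢
  linarith
end

section
/- Let $P, N, k$ be positive integers with $k+1 \le N$, and let $g_{i,p}$ be reals for $i \in [N]$, $p \in [P]$. Define $d_i := \max\{0, \min_{p} g_{i,p}\}$, let $d^*$ be the $(k+1)$-th smallest value among $\{d_i\}_{i \in [N]}$, and for each $p$ let $g_p^*$ be the $(k+1)$-th smallest value among $\{g_{i,p}\}_{i \in [N]}$. If $d^* > 0$, then $g_p^* \ge d^*$ for every $p \in [P]$. -/
/-- Combinatorial heart of Proposition 1: with `d_i = max{0, min_p g_{i,p}}`,
if the `(k+1)`-th smallest distance `d*` is positive, then for every `p` the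
`(k+1)`-th smallest slack `g_p*` satisfies `g_p* ≥ d*`. -/
theorem stmt13 (P N k : ℕ) (hP : 0 < P) (hN : 0 < N) (hkpos : 0 < k)
    (hk : k + 1 ≤ N) (g : Fin N → Fin P → ℝ)
    (σ : Equiv.Perm (Fin N))
    (hσ : Monotone (fun i => max 0 (⨅ p, g (σ i) p)))
    (τ : Fin P → Equiv.Perm (Fin N))
    (hτ : ∀ p, Monotone (fun i => g (τ p i) p))
    (hdpos : 0 < max 0 (⨅ p, g (σ ⟨k, by omega⟩) p)) :
    ∀ p : Fin P, max 0 (⨅ p', g (σ ⟨k, by omega⟩) p') ≤ g (τ p ⟨k, by omega⟩) p := by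
  intro p
  haveI : Nonempty (Fin P) := ⟨⟨0, hP⟩⟩
  set kf : Fin N := ⟨k, by omega⟩ with hkf
  set dstar : ℝ := max 0 (⨅ p', g (σ kf) p') with hd
  -- pigeonhole
  set A : Finset (Fin N) := (Finset.Ici kf).image σ with hA
  set B : Finset (Fin N) := (Finset.Iic kf).image (τ p) with hB
  have hcardA : A.card = N - k := by
    rw [hA, Finset.card_image_of_injective _ σ.injective, Fin.card_Ici]
  have hcardB : B.card = k + 1 := by
    rw [hB, Finset.card_image_of_injective _ (τ p).injective, Fin.card_Iic]
  have hinter : (A ∩ B).Nonempty := by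
    rw [← Finset.card_pos]
    have h1 := Finset.card_union_add_card_inter A B
    have h2 : (A ∪ B).card ≤ N := by
      simpa using Finset.card_le_card (Finset.subset_univ (A ∪ B))
    omega
  obtain ⟨j, hj⟩ := hinter
  rw [Finset.mem_inter] at hj
  obtain ⟨hjA, hjB⟩ := hj
  obtain ⟨i, hi, rfl⟩ := Finset.mem_image.mp hjA
  obtain ⟨m, hm, hmeq⟩ := Finset.mem_image.mp hjB
  rw [Finset.mem_Ici] at hi
  rw [Finset.mem_Iic] at hm
  -- d* ≤ max 0 (inf over p' of g (σ i) p')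
  have h1 : dstar ≤ max 0 (⨅ p', g (σ i) p') := hσ hi
  have h2 : dstar ≤ ⨅ p', g (σ i) p' := by
    rcases le_or_gt dstar (⨅ p', g (σ i) p') with h | h
    · exact h
    · exfalso
      have : max 0 (⨅ p', g (σ i) p') < dstar := max_lt hdpos h
      linarith
  have h3 : (⨅ p', g (σ i) p') ≤ g (σ i) p :=
    ciInf_le (Set.Finite.bddBelow (Set.finite_range _)) p
  have h4 : g (τ p m) p ≤ g (τ p kf) p := hτ p hm
  rw [hmeq] at h4
  linarith
end

section
/- Let $h_1, \dots, h_N > 0$ and consider $R^+ = \{(u, r, z) \in \mathbb{R}_+ \times \mathbb{R}_+^N \times \{0,1\}^N : u + r_i \ge h_i(1 - z_i),\ i \in [N]\}$. For a single index $j \in [N]$, the path inequality with $m = 1$ reads $u + r_j \ge h_j (1 - z_j)$, and for two indices $j_1 > j_2$ with $h_{j_1} \ge h_{j_2}$ it reads $u + r_{j_1} + r_{j_2} \ge (h_{j_1} - h_{j_2})(1 - z_{j_1}) + h_{j_2}(1 - z_{j_2})$. Both inequalities are valid for all points of $R^+$. -/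
/-- Length-1 and length-2 path inequalities are valid for the robust 0-1 set
`R⁺ = {(u,r,z) ∈ ℝ₊ × ℝ₊ᴺ × {0,1}ᴺ : u + r_i ≥ h_i (1 - z_i)}` with `h > 0`. -/
theorem stmt15 (N : ℕ) (h : Fin N → ℝ) (hpos : ∀ i, 0 < h i)
    (u : ℝ) (hu : 0 ≤ u) (r : Fin N → ℝ) (hr : ∀ i, 0 ≤ r i)
    (z : Fin N → ℝ) (hz : ∀ i, z i = 0 ∨ z i = 1)
    (hfeas : ∀ i, h i * (1 - z i) ≤ u + r i) :
    (∀ j : Fin N, h j * (1 - z j) ≤ u + r j) ∧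
    (∀ j₁ j₂ : Fin N, j₂ < j₁ → h j₂ ≤ h j₁ →
      (h j₁ - h j₂) * (1 - z j₁) + h j₂ * (1 - z j₂) ≤ u + r j₁ + r j₂) := by
  refine ⟨hfeas, fun j₁ j₂ _ hle => ?_⟩
  have f1 := hfeas j₁
  have f2 := hfeas j₂
  rcases hz j₁ with e1 | e1 <;> rcases hz j₂ with e2 | e2 <;>
    simp [e1, e2] at * <;> nlinarith [hr j₁, hr j₂, hpos j₁, hpos j₂]
end
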